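/- The number of linear subgraphs |𝓛(H)| of a semistable directed multigraph H is invariant under contraction of contractible edges, hence it is a Weyl function. -/

import Mathlib

open Relation

structure MDigraph where
  V : Type
  E : Type
  [hV : Finite V]
  [hE : Finite E]
  src : E → V
  tgt : E → V

attribute [instance] MDigraph.hV MDigraph.hE

namespace MDigraph

noncomputable def degOut (G : MDigraph) (v : G.V) : ℕ := Nat.card {e : G.E // G.src e = v}
noncomputable def degIn (G : MDigraph) (v : G.V) : ℕ := Nat.card {e : G.E // G.tgt e = v}

def Semistable (G : MDigraph) : Prop :=
  ∀ v : G.V, 1 ≤ G.degIn v ∧ 1 ≤ G.degOut v ∧ 3 ≤ G.degIn v + G.degOut v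

def Stable (G : MDigraph) : Prop :=
  ∀ v : G.V, 2 ≤ G.degIn v ∧ 2 ≤ G.degOut v

def Contractible (G : MDigraph) (e : G.E) : Prop :=
  G.src e ≠ G.tgt e ∧ (G.degOut (G.src e) = 1 ∨ G.degIn (G.tgt e) = 1)

def mergeRel (G : MDigraph) (e0 : G.E) (a b : G.V) : Prop :=
  a = b ∨ ((a = G.src e0 ∨ a = G.tgt e0) ∧ (b = G.src e0 ∨ b = G.tgt e0))

def contract (G : MDigraph) (e0 : G.E) : MDigraph where
  V := Quot (G.mergeRel e0)
  E := {e : G.E // e ≠ e0}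
  src e := Quot.mk _ (G.src e.1)
  tgt e := Quot.mk _ (G.tgt e.1)

structure Iso (G H : MDigraph) where
  vEquiv : G.V ≃ H.V
  eEquiv : G.E ≃ H.E
  src_map : ∀ e, H.src (eEquiv e) = vEquiv (G.src e)
  tgt_map : ∀ e, H.tgt (eEquiv e) = vEquiv (G.tgt e)

def Adj (G : MDigraph) (a b : G.V) : Prop := ∃ e, G.src e = a ∧ G.tgt e = b

def Strong (G : MDigraph) : Prop := ∀ a b : G.V, ReflTransGen G.Adj a b

def ContractStep (G H : MDigraph) : Prop :=
  ∃ e0 : G.E, G.Contractible e0 ∧ Nonempty (Iso (G.contract e0) H)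

def IsStabilization (G H : MDigraph) : Prop :=
  ReflTransGen ContractStep G H ∧ H.Stable

def Stabilizable (G : MDigraph) : Prop := ∃ H, G.IsStabilization H

def IsLinear (G : MDigraph) (L : Set G.E) : Prop :=
  ∀ v : G.V, Nat.card {e : G.E // e ∈ L ∧ G.src e = v} = Nat.card {e : G.E // e ∈ L ∧ G.tgt e = v}
    ∧ Nat.card {e : G.E // e ∈ L ∧ G.src e = v} ≤ 1

def LAdj (G : MDigraph) (L : Set G.E) (a b : G.V) : Prop := ∃ e ∈ L, G.src e = a ∧ G.tgt e = b

def supp (G : MDigraph) (L : Set G.E) : Set G.V := {v | ∃ e ∈ L, G.src e = v ∨ G.tgt e = v}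

noncomputable def components (G : MDigraph) (L : Set G.E) : ℕ :=
  Nat.card (Quot (fun a b : G.supp L => G.LAdj L a.1 b.1))

noncomputable def adjMatrix (G : MDigraph) : Matrix G.V G.V ℤ :=
  Matrix.of fun a b => (Nat.card {e : G.E // G.src e = a ∧ G.tgt e = b} : ℤ)

open Classical in
noncomputable def detIA (G : MDigraph) : ℤ :=
  letI := Fintype.ofFinite G.V
  ((1 : Matrix G.V G.V ℤ) - G.adjMatrix).det

noncomputable def weight (G : MDigraph) : ℤ := (Nat.card G.E : ℤ) - (Nat.card G.V : ℤ)

noncomputable def numLinear (G : MDigraph) : ℕ := Nat.card {L : Set G.E // G.IsLinear L}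

end MDigraph

noncomputable example (G : MDigraph) (C : ℤ) : ℤ := ∑ᶠ L : {L : Set G.E // G.IsLinear L}, C ^ G.components L.1

/-! If `e₀ : u → v` is the only edge leaving `u`, then `L ↦ L \ {e₀}` is a bijection from the
linear subgraphs of `G` onto those of `G / e₀`. Writing `deg⁺_L`, `deg⁻_L` for degrees inside `L`,
linearity at `u` forces `deg⁺_L u = [e₀ ∈ L] = deg⁻_L u`, so at the merged vertex `L \ {e₀}` has
out-degree `deg⁺_L v` and in-degree `deg⁻_L u + deg⁻_L v - [e₀ ∈ L] = deg⁻_L v`. Conversely a linear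
subgraph of `G / e₀` lifts uniquely: `e₀` is added exactly when the lift has an edge entering `u`.
The case `deg⁻ v = 1` reduces to this one by reversing all edges. Hence `|𝓛|` is constant along
chains of contractions, and two graphs with a common stabilization are joined by such chains. -/

open Set

theorem Set.ncard_inter_preimage_pair {α β : Type*} [Finite α] (s : Set α) (f : α → β)
    {b₁ b₂ : β} (h : b₁ ≠ b₂) :
    (s ∩ f ⁻¹' {b₁, b₂}).ncard = (s ∩ f ⁻¹' {b₁}).ncard + (s ∩ f ⁻¹' {b₂}).ncard := by
  rw [← ncard_union_eq]
  · rw [← inter_union_distrib_left, ← preimage_union, ← insert_eq]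
  · exact (disjoint_singleton.mpr h).preimage f |>.inter_left' s |>.inter_right' s

theorem Set.ncard_preimage_val_ne {α : Type*} (t : Set α) (a₀ : α) :
    (Subtype.val ⁻¹' t : Set {a // a ≠ a₀}).ncard = (t \ {a₀}).ncard := by
  have : (Subtype.val ⁻¹' t : Set {a // a ≠ a₀}) = Subtype.val ⁻¹' (t \ {a₀}) := by
    ext ⟨a, ha⟩
    simp [ha]
  rw [this, ncard_preimage_of_injective_subset_range Subtype.val_injective
    (fun a ha => ⟨⟨a, ha.2⟩, rfl⟩)]

theorem Set.ncard_preimage_val_ne_of_notMem {α : Type*} {t : Set α} {a₀ : α} (h : a₀ ∉ t) :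
    (Subtype.val ⁻¹' t : Set {a // a ≠ a₀}).ncard = t.ncard := by
  rw [ncard_preimage_val_ne, sdiff_singleton_eq_self h]

theorem Set.ncard_preimage_val_ne_add_one {α : Type*} [Finite α] {t : Set α} {a₀ : α}
    (h : a₀ ∈ t) : (Subtype.val ⁻¹' t : Set {a // a ≠ a₀}).ncard + 1 = t.ncard := by
  rw [ncard_preimage_val_ne, ncard_sdiff_singleton_add_one h]

/-- A set is determined by its trace on `{a // a ≠ a₀}` and by whether it contains `a₀`. -/
theorem Nat.card_set_eq_of_mem_iff {α : Type*} (a₀ : α) (P Q : Set {a // a ≠ a₀} → Prop) :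
    Nat.card {s : Set α // P (Subtype.val ⁻¹' s) ∧ (a₀ ∈ s ↔ Q (Subtype.val ⁻¹' s))} =
      Nat.card {s' // P s'} := by
  have hpre (s' : Set {a // a ≠ a₀}) (p : Prop) :
      Subtype.val ⁻¹' (Subtype.val '' s' ∪ {a | a = a₀ ∧ p}) = s' := by
    ext ⟨a, ha⟩
    simp [ha]
  refine Nat.card_congr
    { toFun := fun s => ⟨Subtype.val ⁻¹' s.1, s.2.1⟩
      invFun := fun s' => ⟨Subtype.val '' s'.1 ∪ {a | a = a₀ ∧ Q s'.1}, by simp [hpre, s'.2]⟩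
      left_inv := fun s => ?_
      right_inv := fun s' => Subtype.ext (hpre _ _) }
  ext a
  by_cases ha : a = a₀
  · subst ha
    simp [s.2.2]
  · simp [ha]

namespace MDigraph

variable {G H : MDigraph}

def IsLinearAt (G : MDigraph) (L : Set G.E) (t : Set G.V) : Prop :=
  (L ∩ G.src ⁻¹' t).ncard = (L ∩ G.tgt ⁻¹' t).ncard ∧ (L ∩ G.src ⁻¹' t).ncard ≤ 1

theorem isLinear_iff_isLinearAt {L : Set G.E} : G.IsLinear L ↔ ∀ v, G.IsLinearAt L {v} :=
  Iff.rfl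

theorem Iso.isLinear_preimage_iff (φ : Iso G H) (L : Set H.E) :
    G.IsLinear (φ.eEquiv ⁻¹' L) ↔ H.IsLinear L := by
  have hcount (f : G.E → G.V) (f' : H.E → H.V) (hf : ∀ e, f' (φ.eEquiv e) = φ.vEquiv (f e))
      (v : G.V) : (φ.eEquiv ⁻¹' L ∩ f ⁻¹' {v}).ncard = (L ∩ f' ⁻¹' {φ.vEquiv v}).ncard := by
    rw [← ncard_preimage_of_injective_subset_range φ.eEquiv.injective (by simp)]
    congr 1
    ext e
    simp [hf]
  simp only [isLinear_iff_isLinearAt, IsLinearAt, hcount _ _ φ.src_map, hcount _ _ φ.tgt_map]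
  exact φ.vEquiv.forall_congr fun _ => Iff.rfl

theorem Iso.numLinear_eq (φ : Iso G H) : G.numLinear = H.numLinear :=
  Nat.card_congr <| .symm <| (Equiv.Set.congr φ.eEquiv.symm).subtypeEquiv fun L => by
    rw [Equiv.Set.congr_apply, Equiv.image_symm_eq_preimage, φ.isLinear_preimage_iff]

def rev (G : MDigraph) : MDigraph where
  V := G.V
  E := G.E
  src := G.tgt
  tgt := G.src

theorem rev_isLinear_iff {L : Set G.E} : G.rev.IsLinear L ↔ G.IsLinear L :=
  forall_congr' fun _ => ⟨fun h => ⟨h.1.symm, h.1 ▸ h.2⟩, fun h => ⟨h.1.symm, h.1 ▸ h.2⟩⟩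

theorem numLinear_rev : G.rev.numLinear = G.numLinear :=
  Nat.card_congr (Equiv.subtypeEquivRight fun _ => rev_isLinear_iff)

def revContractIso (G : MDigraph) (e₀ : G.E) : Iso (G.rev.contract e₀) (G.contract e₀).rev where
  vEquiv := Quot.congr (Equiv.refl G.V) fun a b => by simp only [mergeRel, rev]; tauto
  eEquiv := Equiv.refl _
  src_map _ := rfl
  tgt_map _ := rfl

section Contract

variable {e₀ : G.E}

-- An `abbrev`, so that rewriting identifies `(G.deleteEdge e₀).V` with `G.V`.
abbrev deleteEdge (G : MDigraph) (e₀ : G.E) : MDigraph where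
  V := G.V
  E := {e // e ≠ e₀}
  src := G.src ∘ Subtype.val
  tgt := G.tgt ∘ Subtype.val

theorem mergeRel_equivalence (G : MDigraph) (e₀ : G.E) : Equivalence (G.mergeRel e₀) := by
  refine ⟨fun _ => .inl rfl, ?_, ?_⟩ <;> simp only [mergeRel] <;> grind

theorem mk_eq_mk_iff {a b : G.V} :
    Quot.mk (G.mergeRel e₀) a = Quot.mk _ b ↔ G.mergeRel e₀ a b :=
  Quot.eq.trans (G.mergeRel_equivalence e₀).eqvGen_iff

theorem preimage_mk_singleton_mk_src :
    Quot.mk (G.mergeRel e₀) ⁻¹' {Quot.mk _ (G.src e₀)} = {G.src e₀, G.tgt e₀} := by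
  ext x
  simp [mk_eq_mk_iff, mergeRel]

theorem preimage_mk_singleton_mk_of_ne {x : G.V} (hu : x ≠ G.src e₀) (hv : x ≠ G.tgt e₀) :
    Quot.mk (G.mergeRel e₀) ⁻¹' {Quot.mk _ x} = {x} := by
  ext y
  simp only [mem_preimage, mem_singleton_iff, mk_eq_mk_iff, mergeRel]
  grind

theorem contract_isLinear_iff (L : Set (G.deleteEdge e₀).E) :
    (G.contract e₀).IsLinear L ↔
      (∀ x, x ≠ G.src e₀ → x ≠ G.tgt e₀ → (G.deleteEdge e₀).IsLinearAt L {x}) ∧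
        (G.deleteEdge e₀).IsLinearAt L {G.src e₀, G.tgt e₀} := by
  have hmk : Quot.mk (G.mergeRel e₀) (G.tgt e₀) = Quot.mk _ (G.src e₀) :=
    mk_eq_mk_iff.mpr (.inr ⟨.inr rfl, .inl rfl⟩)
  have hfiber (x : G.V) : (G.contract e₀).IsLinearAt L {Quot.mk _ x} ↔
      (G.deleteEdge e₀).IsLinearAt L (Quot.mk (G.mergeRel e₀) ⁻¹' {Quot.mk _ x}) :=
    Iff.rfl
  refine (isLinear_iff_isLinearAt.trans Quot.mk_surjective.forall).trans
    ((forall_congr' hfiber).trans ?_)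
  constructor
  · intro h
    refine ⟨fun x hu hv => ?_, ?_⟩
    · rw [← preimage_mk_singleton_mk_of_ne hu hv]; exact h x
    · rw [← preimage_mk_singleton_mk_src]; exact h (G.src e₀)
  · rintro ⟨hother, hpair⟩ x
    by_cases hx : x = G.src e₀ ∨ x = G.tgt e₀
    · obtain rfl | rfl := hx
      · rwa [preimage_mk_singleton_mk_src]
      · rwa [hmk, preimage_mk_singleton_mk_src]
    · push Not at hx
      rw [preimage_mk_singleton_mk_of_ne hx.1 hx.2]
      exact hother x hx.1 hx.2

theorem eq_of_src_eq_of_degOut_eq_one (h1 : G.degOut (G.src e₀) = 1) {e : G.E}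
    (he : G.src e = G.src e₀) : e = e₀ :=
  congrArg Subtype.val ((Nat.card_eq_one_iff_unique.mp h1).1.elim ⟨e, he⟩ ⟨e₀, rfl⟩)

theorem isLinearAt_singleton_iff_deleteEdge {L : Set G.E} {x : G.V} (hu : x ≠ G.src e₀)
    (hv : x ≠ G.tgt e₀) :
    G.IsLinearAt L {x} ↔ (G.deleteEdge e₀).IsLinearAt (Subtype.val ⁻¹' L) {x} := by
  have hsrc : (L ∩ G.src ⁻¹' {x}).ncard =
      (Subtype.val ⁻¹' L ∩ (G.deleteEdge e₀).src ⁻¹' {x}).ncard :=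
    (ncard_preimage_val_ne_of_notMem fun h => hu h.2.symm).symm
  have htgt : (L ∩ G.tgt ⁻¹' {x}).ncard =
      (Subtype.val ⁻¹' L ∩ (G.deleteEdge e₀).tgt ⁻¹' {x}).ncard :=
    (ncard_preimage_val_ne_of_notMem fun h => hv h.2.symm).symm
  rw [IsLinearAt, IsLinearAt, hsrc, htgt]

theorem isLinearAt_src_and_tgt_iff_deleteEdge (hne : G.src e₀ ≠ G.tgt e₀)
    (h1 : G.degOut (G.src e₀) = 1) (L : Set G.E) :
    G.IsLinearAt L {G.src e₀} ∧ G.IsLinearAt L {G.tgt e₀} ↔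
      (G.deleteEdge e₀).IsLinearAt (Subtype.val ⁻¹' L) {G.src e₀, G.tgt e₀} ∧
        (e₀ ∈ L ↔ ∃ e ∈ (Subtype.val ⁻¹' L : Set {e // e ≠ e₀}), G.tgt e = G.src e₀) := by
  set L' : Set (G.deleteEdge e₀).E := Subtype.val ⁻¹' L
  have hsrc_u' : (L' ∩ (G.deleteEdge e₀).src ⁻¹' {G.src e₀}).ncard = 0 := by
    rw [ncard_eq_zero, eq_empty_iff_forall_notMem]
    rintro ⟨e, he⟩ ⟨-, hs⟩
    exact he (eq_of_src_eq_of_degOut_eq_one h1 hs)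
  obtain ⟨ε, hε1, hε, hsrc_u, htgt_v⟩ : ∃ ε ≤ 1, (e₀ ∈ L ↔ ε = 1) ∧
      (L ∩ G.src ⁻¹' {G.src e₀}).ncard = ε ∧
      (L ∩ G.tgt ⁻¹' {G.tgt e₀}).ncard = (L' ∩ (G.deleteEdge e₀).tgt ⁻¹' {G.tgt e₀}).ncard + ε := by
    by_cases h0 : e₀ ∈ L
    · refine ⟨1, le_rfl, iff_of_true h0 rfl, ?_,
        (ncard_preimage_val_ne_add_one (t := L ∩ G.tgt ⁻¹' {G.tgt e₀}) ⟨h0, rfl⟩).symm⟩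
      rw [← ncard_preimage_val_ne_add_one (t := L ∩ G.src ⁻¹' {G.src e₀}) ⟨h0, rfl⟩]
      exact congrArg (· + 1) hsrc_u'
    · refine ⟨0, zero_le_one, iff_of_false h0 zero_ne_one, ?_,
        (ncard_preimage_val_ne_of_notMem fun h => h0 h.1).symm⟩
      rw [← ncard_preimage_val_ne_of_notMem fun h => h0 h.1]
      exact hsrc_u'
  have hsrc_v : (L ∩ G.src ⁻¹' {G.tgt e₀}).ncard =
      (L' ∩ (G.deleteEdge e₀).src ⁻¹' {G.tgt e₀}).ncard :=
    (ncard_preimage_val_ne_of_notMem fun h => hne h.2).symm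
  have htgt_u : (L ∩ G.tgt ⁻¹' {G.src e₀}).ncard =
      (L' ∩ (G.deleteEdge e₀).tgt ⁻¹' {G.src e₀}).ncard :=
    (ncard_preimage_val_ne_of_notMem fun h => hne h.2.symm).symm
  have hex : (∃ e ∈ L', G.tgt e = G.src e₀) ↔
      0 < (L' ∩ (G.deleteEdge e₀).tgt ⁻¹' {G.src e₀}).ncard := by
    rw [ncard_pos]
    rfl
  rw [IsLinearAt, IsLinearAt, IsLinearAt, hsrc_u, hsrc_v, htgt_u, htgt_v, hex, hε]
  simp only [deleteEdge, ncard_inter_preimage_pair _ _ hne] at hsrc_u' ⊢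
  omega

theorem isLinear_iff_contract_isLinear (hne : G.src e₀ ≠ G.tgt e₀)
    (h1 : G.degOut (G.src e₀) = 1) (L : Set G.E) :
    G.IsLinear L ↔ (G.contract e₀).IsLinear (Subtype.val ⁻¹' L) ∧
      (e₀ ∈ L ↔ ∃ e ∈ (Subtype.val ⁻¹' L : Set {e // e ≠ e₀}), G.tgt e = G.src e₀) := by
  have hsplit : G.IsLinear L ↔ (∀ x, x ≠ G.src e₀ → x ≠ G.tgt e₀ → G.IsLinearAt L {x}) ∧
      G.IsLinearAt L {G.src e₀} ∧ G.IsLinearAt L {G.tgt e₀} := by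
    refine ⟨fun h => ⟨fun x _ _ => h x, h _, h _⟩, fun ⟨hother, hu, hv⟩ x => ?_⟩
    by_cases hxu : x = G.src e₀
    · exact hxu ▸ hu
    by_cases hxv : x = G.tgt e₀
    · exact hxv ▸ hv
    exact hother x hxu hxv
  rw [hsplit, isLinearAt_src_and_tgt_iff_deleteEdge hne h1, ← and_assoc]
  refine and_congr_left' (Iff.trans ?_ (contract_isLinear_iff _).symm)
  refine and_congr_left' (forall_congr' fun x => forall₂_congr fun hu hv => ?_)
  exact isLinearAt_singleton_iff_deleteEdge hu hv

theorem numLinear_contract_of_degOut_eq_one (hne : G.src e₀ ≠ G.tgt e₀)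
    (h1 : G.degOut (G.src e₀) = 1) : (G.contract e₀).numLinear = G.numLinear :=
  (Nat.card_set_eq_of_mem_iff e₀ (G.contract e₀).IsLinear
      fun L' => ∃ e ∈ L', G.tgt e.1 = G.src e₀).symm.trans <|
    Nat.card_congr <| Equiv.subtypeEquivRight fun L =>
      (isLinear_iff_contract_isLinear hne h1 L).symm

theorem numLinear_contract (hc : G.Contractible e₀) : (G.contract e₀).numLinear = G.numLinear := by
  obtain ⟨hne, h1 | h1⟩ := hc
  · exact numLinear_contract_of_degOut_eq_one hne h1
  · calc (G.contract e₀).numLinear = (G.contract e₀).rev.numLinear := numLinear_rev.symm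
      _ = (G.rev.contract e₀).numLinear := (G.revContractIso e₀).numLinear_eq.symm
      _ = G.rev.numLinear := numLinear_contract_of_degOut_eq_one (Ne.symm hne) h1
      _ = G.numLinear := numLinear_rev

end Contract

theorem ContractStep.numLinear_eq (h : ContractStep G H) : G.numLinear = H.numLinear := by
  obtain ⟨e₀, hc, ⟨φ⟩⟩ := h
  exact (numLinear_contract hc).symm.trans φ.numLinear_eq

theorem numLinear_eq_of_reflTransGen_contractStep (h : ReflTransGen ContractStep G H) :
    G.numLinear = H.numLinear := by
  induction h with
  | refl => rfl
  | tail _ hstep ih => exact ih.trans hstep.numLinear_eq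

end MDigraph

/-- The number of linear subgraphs is invariant under contraction of
contractible edges, hence is a Weyl function. -/
theorem numLinear_weyl_function :
    (∀ H H' : MDigraph, H.Semistable → MDigraph.ContractStep H H' →
      H.numLinear = H'.numLinear) ∧
    (∀ H₁ H₂ G : MDigraph, H₁.Semistable → H₂.Semistable →
      H₁.IsStabilization G → H₂.IsStabilization G → H₁.numLinear = H₂.numLinear) :=
  ⟨fun _ _ _ h => h.numLinear_eq, fun _ _ _ _ _ h₁ h₂ =>
    (MDigraph.numLinear_eq_of_reflTransGen_contractStep h₁.1).trans
      (MDigraph.numLinear_eq_of_reflTransGen_contractStep h₂.1).symm⟩
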